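/- Let x, s ∈ int 𝓛^n. Then the vectors T_x s and T_s x have the same Jordan eigenvalues; that is, (T_x s)₀ = (T_s x)₀ and ‖overline{(T_x s)}‖ = ‖overline{(T_s x)}‖, where v = (v₀; v̄) denotes the splitting of v ∈ ℝ^n into its first coordinate and the rest. In particular, ‖T_x s − ν e‖_F = ‖T_s x − ν e‖_F for every ν ∈ ℝ. -/

import Mathlib

set_option synthInstance.maxHeartbeats 1000000
set_option maxHeartbeats 1000000

noncomputable section
open scoped BigOperators

namespace SOCP

/-- `E k` is `ℝ^(k+1)`, written as `(x₀; x̄)` with `x̄ ∈ ℝ^k`. -/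
abbrev E (k : ℕ) := EuclideanSpace ℝ (Fin (k + 1))

/-- Build an element of `E k` from a plain function. -/
def mk {k : ℕ} (f : Fin (k + 1) → ℝ) : E k := (WithLp.equiv 2 _).symm f

/-- The Euclidean norm `‖x̄‖` of the tail of `x`. -/
def tnorm {k : ℕ} (x : E k) : ℝ := Real.sqrt (∑ i : Fin k, (x i.succ) ^ 2)

/-- First Jordan eigenvalue `λ₁(x) = x₀ + ‖x̄‖`. -/
def lam1 {k : ℕ} (x : E k) : ℝ := x 0 + tnorm x

/-- Second Jordan eigenvalue `λ₂(x) = x₀ − ‖x̄‖`. -/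
def lam2 {k : ℕ} (x : E k) : ℝ := x 0 - tnorm x

/-- Jordan product `x ∘ y = (xᵀy; x₀ȳ + y₀x̄)`. -/
def jmul {k : ℕ} (x y : E k) : E k :=
  mk (fun j => if j = 0 then ∑ i, x i * y i else x 0 * y j + y 0 * x j)

/-- The Jordan identity `e = (1; 0)`. -/
def idE {k : ℕ} : E k := mk (fun j => if j = 0 then 1 else 0)

/-- First Jordan frame vector `c₁(x) = ½(1; x̄/‖x̄‖)`. -/
def c1 {k : ℕ} (x : E k) : E k :=
  mk (fun j => if j = 0 then 1 / 2 else x j / (2 * tnorm x))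

/-- Second Jordan frame vector `c₂(x) = ½(1; −x̄/‖x̄‖)`. -/
def c2 {k : ℕ} (x : E k) : E k :=
  mk (fun j => if j = 0 then 1 / 2 else -x j / (2 * tnorm x))

/-- Arrowhead matrix `Arw(x) = [[x₀, x̄ᵀ], [x̄, x₀ I]]`. -/
def Arw {k : ℕ} (x : E k) : Matrix (Fin (k + 1)) (Fin (k + 1)) ℝ :=
  Matrix.of fun i j =>
    if i = 0 then x j else if j = 0 then x i else if i = j then x 0 else 0

/-- Quadratic representation `Q_x = 2 Arw(x)² − Arw(x ∘ x)`. -/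
def Qmat {k : ℕ} (x : E k) : Matrix (Fin (k + 1)) (Fin (k + 1)) ℝ :=
  (2 : ℝ) • (Arw x * Arw x) - Arw (jmul x x)

/-- Jordan square root `x^{1/2} = √λ₁ c₁ + √λ₂ c₂` (equal to `(√x₀; 0)` when `x̄ = 0`). -/
def jsqrt {k : ℕ} (x : E k) : E k :=
  if tnorm x = 0 then mk (fun j => if j = 0 then Real.sqrt (x 0) else 0)
  else Real.sqrt (lam1 x) • c1 x + Real.sqrt (lam2 x) • c2 x

/-- `T_x := Q_{x^{1/2}}`. -/
def Tmat {k : ℕ} (x : E k) : Matrix (Fin (k + 1)) (Fin (k + 1)) ℝ := Qmat (jsqrt x)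

/-- Jordan inverse `x⁻¹ = λ₁⁻¹ c₁ + λ₂⁻¹ c₂` (equal to `(x₀⁻¹; 0)` when `x̄ = 0`). -/
def jinv {k : ℕ} (x : E k) : E k :=
  if tnorm x = 0 then mk (fun j => if j = 0 then (x 0)⁻¹ else 0)
  else (lam1 x)⁻¹ • c1 x + (lam2 x)⁻¹ • c2 x

/-- Matrix-vector product, as a map on `E k`. -/
def mulVecE {k : ℕ} (M : Matrix (Fin (k + 1)) (Fin (k + 1)) ℝ) (v : E k) : E k :=
  mk (M.mulVec (WithLp.equiv 2 _ v))

/-- Block vectors `x = (x₁; …; x_r)` with `x_i ∈ ℝ^{d i + 2}` (so each block has dim ≥ 2). -/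
abbrev BV {r : ℕ} (d : Fin r → ℕ) : Type := (i : Fin r) → E (d i + 1)

variable {r : ℕ} {d : Fin r → ℕ}

/-- Spectral norm `‖x‖₂ = max_i (|x_{i,0}| + ‖x̄_i‖)`. -/
def specNorm (x : BV d) : ℝ := ⨆ i, (|x i 0| + tnorm (x i))

/-- Frobenius norm `‖x‖_F = √(Σ_i (λ₁(x_i)² + λ₂(x_i)²))`. -/
def frobNorm (x : BV d) : ℝ := Real.sqrt (∑ i, (lam1 (x i) ^ 2 + lam2 (x i) ^ 2))

/-- Minimum Jordan eigenvalue `λ_min(x) = min_i λ₂(x_i)`. -/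
def lamMin (x : BV d) : ℝ := ⨅ i, lam2 (x i)

/-- Blockwise Jordan product. -/
def jmulB (x y : BV d) : BV d := fun i => jmul (x i) (y i)

/-- Block identity element. -/
def idB : BV d := fun _ => idE

/-- Membership in the interior of the product of Lorentz cones: `‖x̄_i‖ < x_{i,0}` for all `i`. -/
def inIntLB (x : BV d) : Prop := ∀ i, tnorm (x i) < x i 0

/-- Euclidean inner product of the concatenated vectors. -/
def ip (x y : BV d) : ℝ := ∑ i, ∑ j, x i j * y i j

/-- Block-diagonal application of `T_x`: `(T_x s)_i = T_{x_i} s_i`. -/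
def TB (x s : BV d) : BV d := fun i => mulVecE (Tmat (x i)) (s i)

/-- Distance from the central path `d(x, s, ν) = ‖T_x s − ν e‖_F`. -/
def cdist (x s : BV d) (ν : ℝ) : ℝ := frobNorm (TB x s - ν • (idB : BV d))

/-- Blockwise Jordan inverse. -/
def jinvB (x : BV d) : BV d := fun i => jinv (x i)

/-!
Write `x = w ∘ w` with `w = x^{1/2}`, so that `T_x s = Q_w s = 2 w ∘ (w ∘ s) − (w ∘ w) ∘ s`.
A direct computation gives `(Q_w s)₀ = ⟨w ∘ w, s⟩` and `det (Q_w s) = det (w ∘ w) · det s`,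
where `det v = v₀² − ‖v̄‖²`. Hence `(T_x s)₀ = ⟨x, s⟩` and `det (T_x s) = det x · det s` are
symmetric in `x` and `s`, and the Jordan eigenvalues `v₀ ± ‖v̄‖` are determined by `v₀` and `det v`.
-/

variable {k : ℕ}

def tail (x : E k) : Fin k → ℝ := fun j => x j.succ

/-- The Jordan determinant `λ₁ λ₂`. -/
def jdet (x : E k) : ℝ := x 0 ^ 2 - tail x ⬝ᵥ tail x

lemma tail_apply (x : E k) (j : Fin k) : tail x j = x j.succ := rfl

lemma tail_sub (x y : E k) : tail (x - y) = tail x - tail y := rfl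

lemma tail_smul (c : ℝ) (x : E k) : tail (c • x) = c • tail x := rfl

lemma ext_zero_tail {x y : E k} (h0 : x 0 = y 0) (htail : tail x = tail y) : x = y := by
  ext i
  cases i using Fin.cases with
  | zero => exact h0
  | succ j => exact congrFun htail j

lemma tnorm_sq (x : E k) : tnorm x ^ 2 = tail x ⬝ᵥ tail x := by
  rw [tnorm, Real.sq_sqrt (Finset.sum_nonneg fun _ _ => sq_nonneg _)]
  simp only [dotProduct, tail_apply, sq]

lemma tail_eq_zero_of_tnorm_eq_zero {x : E k} (h : tnorm x = 0) : tail x = 0 :=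
  dotProduct_self_eq_zero.mp (by rw [← tnorm_sq, h]; ring)

lemma jmul_apply_zero (x y : E k) : jmul x y 0 = x 0 * y 0 + tail x ⬝ᵥ tail y :=
  Fin.sum_univ_succ _

lemma tail_jmul (x y : E k) : tail (jmul x y) = x 0 • tail y + y 0 • tail x := by
  ext j
  simp [tail, jmul, mk, Fin.succ_ne_zero]

lemma jdet_jmul_self (w : E k) : jdet (jmul w w) = jdet w ^ 2 := by
  simp only [jdet, jmul_apply_zero, tail_jmul, dotProduct_add, add_dotProduct, smul_dotProduct,
    dotProduct_smul, smul_eq_mul]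
  ring

lemma mulVecE_Arw (w v : E k) : mulVecE (Arw w) v = jmul w v := by
  refine ext_zero_tail ?_ ?_
  · simp [mulVecE, mk, Matrix.mulVec, dotProduct, Arw, jmul]
  · ext j
    change (Arw w).mulVec (fun i => v i) j.succ = jmul w v j.succ
    simp only [Matrix.mulVec, dotProduct, Arw, Matrix.of_apply]
    rw [Fin.sum_univ_succ]
    simp only [Fin.succ_ne_zero, ↓reduceIte, Fin.succ_inj, ite_mul, zero_mul, Finset.sum_ite_eq,
      Finset.mem_univ, jmul, mk, WithLp.equiv_symm_apply]
    ring

lemma mulVecE_Qmat (w v : E k) :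
    mulVecE (Qmat w) v = (2 : ℝ) • jmul w (jmul w v) - jmul (jmul w w) v := by
  rw [← mulVecE_Arw, ← mulVecE_Arw, ← mulVecE_Arw]
  ext i
  simp [mulVecE, mk, Qmat, Matrix.sub_mulVec, Matrix.smul_mulVec, Matrix.mulVec_mulVec]

lemma jmul_comm (x y : E k) : jmul x y = jmul y x :=
  ext_zero_tail (by rw [jmul_apply_zero, jmul_apply_zero, mul_comm, dotProduct_comm])
    (by rw [tail_jmul, tail_jmul, add_comm])

lemma mulVecE_Qmat_apply_zero (w s : E k) : mulVecE (Qmat w) s 0 = jmul (jmul w w) s 0 := by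
  simp only [mulVecE_Qmat, PiLp.sub_apply, PiLp.smul_apply, jmul_apply_zero, tail_jmul,
    dotProduct_add, add_dotProduct, smul_dotProduct, dotProduct_smul, smul_eq_mul]
  ring

lemma jdet_mulVecE_Qmat (w s : E k) : jdet (mulVecE (Qmat w) s) = jdet (jmul w w) * jdet s := by
  rw [jdet_jmul_self]
  simp only [jdet, mulVecE_Qmat, PiLp.sub_apply, PiLp.smul_apply, tail_sub, tail_smul,
    jmul_apply_zero, tail_jmul, dotProduct_add, add_dotProduct, sub_dotProduct, dotProduct_sub,
    smul_dotProduct, dotProduct_smul, smul_eq_mul, dotProduct_comm (tail s) (tail w)]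
  ring

lemma tnorm_eq_sqrt_jdet (x : E k) : tnorm x = √(x 0 ^ 2 - jdet x) := by
  rw [jdet, sub_sub_cancel, ← tnorm_sq]
  exact (Real.sqrt_sq (Real.sqrt_nonneg _)).symm

lemma norm_sub_smul_idE (u : E k) (ν : ℝ) : ‖u - ν • idE‖ = √((u 0 - ν) ^ 2 + tnorm u ^ 2) := by
  rw [EuclideanSpace.norm_eq, Fin.sum_univ_succ, tnorm_sq]
  simp [idE, mk, Fin.succ_ne_zero, dotProduct, tail, sq]

lemma jmul_self_jsqrt {x : E k} (hx : tnorm x ≤ x 0) : jmul (jsqrt x) (jsqrt x) = x := by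
  by_cases ht : tnorm x = 0
  · have h0 : jsqrt x 0 = √(x 0) := by simp [jsqrt, ht, mk]
    have htail : tail (jsqrt x) = 0 := by
      ext j
      simp [jsqrt, ht, mk, tail, Fin.succ_ne_zero]
    refine ext_zero_tail ?_ ?_
    · rw [jmul_apply_zero, h0, htail, zero_dotProduct, add_zero, Real.mul_self_sqrt (ht ▸ hx)]
    · rw [tail_jmul, htail, smul_zero, add_zero, tail_eq_zero_of_tnorm_eq_zero ht]
  · have htnorm : 0 ≤ tnorm x := Real.sqrt_nonneg _
    set a := √(lam1 x)
    set b := √(lam2 x)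
    have ha : a ^ 2 = x 0 + tnorm x := Real.sq_sqrt (by rw [lam1]; linarith)
    have hb : b ^ 2 = x 0 - tnorm x := Real.sq_sqrt (by rw [lam2]; linarith)
    have h0 : jsqrt x 0 = (a + b) / 2 := by
      simp only [jsqrt, ht, ↓reduceIte, c1, c2, mk, WithLp.equiv_symm_apply, PiLp.add_apply,
        PiLp.smul_apply, smul_eq_mul]
      ring
    have htail : tail (jsqrt x) = ((a - b) / (2 * tnorm x)) • tail x := by
      ext j
      simp only [tail, jsqrt, ht, ↓reduceIte, c1, c2, mk, WithLp.equiv_symm_apply, PiLp.add_apply,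
        PiLp.smul_apply, Fin.succ_ne_zero, smul_eq_mul, Pi.smul_apply]
      ring
    refine ext_zero_tail ?_ ?_
    · rw [jmul_apply_zero, h0, htail, smul_dotProduct, dotProduct_smul, ← tnorm_sq, smul_eq_mul,
        smul_eq_mul]
      field_simp
      linear_combination 2 * (ha + hb)
    -- `(√λ₁ + √λ₂)(√λ₁ − √λ₂) = λ₁ − λ₂ = 2‖x̄‖`
    · rw [tail_jmul, htail, h0, smul_smul, ← add_smul]
      convert one_smul ℝ (tail x)
      field_simp
      linear_combination 2 * (ha - hb)

lemma mulVecE_Tmat_apply_zero {x : E k} (hx : tnorm x ≤ x 0) (s : E k) :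
    mulVecE (Tmat x) s 0 = jmul x s 0 := by
  rw [Tmat, mulVecE_Qmat_apply_zero, jmul_self_jsqrt hx]

lemma jdet_mulVecE_Tmat {x : E k} (hx : tnorm x ≤ x 0) (s : E k) :
    jdet (mulVecE (Tmat x) s) = jdet x * jdet s := by
  rw [Tmat, jdet_mulVecE_Qmat, jmul_self_jsqrt hx]

/-- For `x, s ∈ int 𝓛^n`, the vectors `T_x s` and `T_s x` have the same
Jordan eigenvalues, i.e. the same first coordinate and the same tail norm; in particular
`‖T_x s − ν e‖_F = ‖T_s x − ν e‖_F` for every `ν`. -/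
theorem Tx_s_eigenvalues_symm {k : ℕ} (x s : E k)
    (hx : tnorm x < x 0) (hs : tnorm s < s 0) :
    (mulVecE (Tmat x) s) 0 = (mulVecE (Tmat s) x) 0 ∧
    tnorm (mulVecE (Tmat x) s) = tnorm (mulVecE (Tmat s) x) ∧
    ∀ ν : ℝ, Real.sqrt 2 * ‖mulVecE (Tmat x) s - ν • idE‖ =
      Real.sqrt 2 * ‖mulVecE (Tmat s) x - ν • idE‖ := by
  have h0 : mulVecE (Tmat x) s 0 = mulVecE (Tmat s) x 0 := by
    rw [mulVecE_Tmat_apply_zero hx.le, mulVecE_Tmat_apply_zero hs.le, jmul_comm]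
  have htnorm : tnorm (mulVecE (Tmat x) s) = tnorm (mulVecE (Tmat s) x) := by
    rw [tnorm_eq_sqrt_jdet, tnorm_eq_sqrt_jdet, h0, jdet_mulVecE_Tmat hx.le,
      jdet_mulVecE_Tmat hs.le, mul_comm]
  refine ⟨h0, htnorm, fun ν => ?_⟩
  rw [norm_sub_smul_idE, norm_sub_smul_idE, h0, htnorm]

end SOCP
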